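/- If two triangulations T and T' of a convex polygon are related by an inscribed-triangle hexagonal move (in a hexagonal sub-polygon with vertices 1,...,6, replacing the three diagonals {13, 35, 51} by {24, 46, 62}), then T and T' have the same unique proper P¹(F_2)-coloring with fixed boundary conditions. -/
import Mathlib



/-- The projective line over a field `F`. -/
abbrev P1 (F : Type*) [Field F] := Projectivization F (F × F)

/-- The point `[1:0]` of the projective line. -/
noncomputable def ptZero (F : Type*) [Field F] : P1 F :=
  Projectivization.mk F (1, 0) (fun h => one_ne_zero (congrArg Prod.fst h))

/-- The point `[0:1]` of the projective line. -/
noncomputable def ptInf (F : Type*) [Field F] : P1 F :=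
  Projectivization.mk F (0, 1) (fun h => one_ne_zero (congrArg Prod.snd h))

/-- The point `[1:1]` of the projective line. -/
noncomputable def ptOne (F : Type*) [Field F] : P1 F :=
  Projectivization.mk F (1, 1) (fun h => one_ne_zero (congrArg Prod.fst h))

/-- `p = (i, j)` is a diagonal of the convex `(m+1)`-gon with vertices `0, …, m`:
`i < j`, the two vertices are not consecutive, and `(0, m)` is excluded (it is a side). -/
def IsDiag (m : ℕ) (p : ℕ × ℕ) : Prop :=
  p.1 + 2 ≤ p.2 ∧ p.2 ≤ m ∧ ¬(p.1 = 0 ∧ p.2 = m)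

instance (m : ℕ) (p : ℕ × ℕ) : Decidable (IsDiag m p) := by unfold IsDiag; infer_instance

/-- The type of diagonals of the convex `(m+1)`-gon. -/
abbrev Diagonal (m : ℕ) := {p : ℕ × ℕ // IsDiag m p}

/-- Two diagonals cross in the interior of the polygon. -/
def Crossing {m : ℕ} (d e : Diagonal m) : Prop :=
  (d.val.1 < e.val.1 ∧ e.val.1 < d.val.2 ∧ d.val.2 < e.val.2) ∨
  (e.val.1 < d.val.1 ∧ d.val.1 < e.val.2 ∧ e.val.2 < d.val.2)

/-- A triangulation of the convex `(m+1)`-gon: a maximal set of pairwise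
non-crossing diagonals (maximality = having `(m+1) - 3` diagonals). -/
structure Triangulation (m : ℕ) where
  diags : Finset (Diagonal m)
  noncross : ∀ d ∈ diags, ∀ e ∈ diags, ¬ Crossing d e
  card_eq : diags.card = m - 2

/-- `y` takes distinct values on the endpoints of every diagonal of `T`
(i.e. `y` lies in the cluster torus of `T`). -/
def ProperDiags {F : Type*} [Field F] {m : ℕ} (T : Triangulation m) (y : ℕ → P1 F) : Prop :=
  ∀ d ∈ T.diags, y d.val.1 ≠ y d.val.2

/-- `c` is a proper coloring of the full graph of the triangulation `T`
(sides of the polygon together with the diagonals of `T`). -/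
def ProperGraph {F : Type*} [Field F] {m : ℕ} (T : Triangulation m) (c : ℕ → P1 F) : Prop :=
  (∀ i < m, c i ≠ c (i + 1)) ∧ c m ≠ c 0 ∧ ProperDiags T c

/-- `y` is a point of `X_F(m)`: `y 0 = [1:0]`, `y m = [0:1]`, consecutive entries distinct. -/
def XCond (F : Type*) [Field F] (m : ℕ) (y : ℕ → P1 F) : Prop :=
  y 0 = ptZero F ∧ y m = ptInf F ∧ ∀ i < m, y i ≠ y (i + 1)

/-- `y` is the alternating sequence `([1:0], [0:1], [1:0], …)` on `0, …, m`. -/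
def IsAltSeq (F : Type*) [Field F] (m : ℕ) (y : ℕ → P1 F) : Prop :=
  ∀ i ≤ m, y i = if i % 2 = 0 then ptZero F else ptInf F

/-- The diagonal `d` is valid for the point `y`: its endpoints have distinct labels and
on each of the two sub-polygons determined by `d` the labels take at least three values. -/
def ValidDiag (F : Type*) [Field F] (m : ℕ) (y : ℕ → P1 F) (d : Diagonal m) : Prop :=
  y d.val.1 ≠ y d.val.2 ∧
  3 ≤ (y '' (Set.Icc d.val.1 d.val.2)).ncard ∧
  3 ≤ (y '' (Set.Icc 0 d.val.1 ∪ Set.Icc d.val.2 m)).ncard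

/-- `T'` is obtained from `T` by removing the diagonals `old` and adding the diagonals `new`. -/
def SwapMove {m : ℕ} (T T' : Triangulation m) (old new : Finset (Diagonal m)) : Prop :=
  old ⊆ T.diags ∧ T'.diags = (T.diags \ old) ∪ new

/-- Zig-zag hexagonal move: inside a hexagonal sub-polygon with vertices
`v 0 < ⋯ < v 5`, replace the zig-zag `{15, 35, 36}` by the zig-zag `{24, 26, 46}`
(in the labels `1, …, 6` of the hexagon). -/
def ZigZagMoveOne {m : ℕ} (T T' : Triangulation m) : Prop :=
  ∃ v : Fin 6 → ℕ, StrictMono v ∧ v 5 ≤ m ∧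
    ∃ (h1 : IsDiag m (v 0, v 4)) (h2 : IsDiag m (v 2, v 4)) (h3 : IsDiag m (v 2, v 5))
      (h4 : IsDiag m (v 1, v 3)) (h5 : IsDiag m (v 1, v 5)) (h6 : IsDiag m (v 3, v 5)),
      SwapMove T T' {⟨(v 0, v 4), h1⟩, ⟨(v 2, v 4), h2⟩, ⟨(v 2, v 5), h3⟩}
        {⟨(v 1, v 3), h4⟩, ⟨(v 1, v 5), h5⟩, ⟨(v 3, v 5), h6⟩}

/-- Inscribed-triangle hexagonal move: inside a hexagonal sub-polygon with vertices
`v 0 < ⋯ < v 5`, replace the inscribed triangle `{13, 35, 51}` by `{24, 46, 62}`. -/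
def InscribedMoveOne {m : ℕ} (T T' : Triangulation m) : Prop :=
  ∃ v : Fin 6 → ℕ, StrictMono v ∧ v 5 ≤ m ∧
    ∃ (h1 : IsDiag m (v 0, v 2)) (h2 : IsDiag m (v 2, v 4)) (h3 : IsDiag m (v 0, v 4))
      (h4 : IsDiag m (v 1, v 3)) (h5 : IsDiag m (v 3, v 5)) (h6 : IsDiag m (v 1, v 5)),
      SwapMove T T' {⟨(v 0, v 2), h1⟩, ⟨(v 2, v 4), h2⟩, ⟨(v 0, v 4), h3⟩}
        {⟨(v 1, v 3), h4⟩, ⟨(v 3, v 5), h5⟩, ⟨(v 1, v 5), h6⟩}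

/-- A hexagonal move (in either direction). -/
def HexMove {m : ℕ} (T T' : Triangulation m) : Prop :=
  ZigZagMoveOne T T' ∨ ZigZagMoveOne T' T ∨ InscribedMoveOne T T' ∨ InscribedMoveOne T' T


lemma P1_cases (p : P1 (ZMod 2)) :
    p = ptZero (ZMod 2) ∨ p = ptInf (ZMod 2) ∨ p = ptOne (ZMod 2) := by
  induction p using Projectivization.ind with
  | h v hv =>
    obtain ⟨x, y⟩ := v
    have hall : ∀ z : ZMod 2, z = 0 ∨ z = 1 := by decide
    rcases hall x with rfl | rfl <;> rcases hall y with rfl | rfl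
    · exact absurd rfl hv
    · exact Or.inr (Or.inl rfl)
    · exact Or.inl rfl
    · exact Or.inr (Or.inr rfl)

lemma myUnitsEqOne (a : (ZMod 2)ˣ) : (a : ZMod 2) = 1 := by
  have hall : ∀ z : ZMod 2, z = 0 ∨ z = 1 := by decide
  rcases hall (a : ZMod 2) with h | h
  · exact absurd h a.ne_zero
  · exact h

lemma mk_injective {v w : ZMod 2 × ZMod 2} (hv : v ≠ 0) (hw : w ≠ 0)
    (h : Projectivization.mk (ZMod 2) v hv = Projectivization.mk (ZMod 2) w hw) : v = w := by
  rw [Projectivization.mk_eq_mk_iff] at h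
  obtain ⟨a, ha⟩ := h
  have h1 : (a : ZMod 2) = 1 := myUnitsEqOne a
  rw [Units.smul_def, h1, one_smul] at ha
  exact ha.symm

lemma ptZero_ne_ptInf : ptZero (ZMod 2) ≠ ptInf (ZMod 2) := by
  intro h
  have := mk_injective _ _ h
  simp [Prod.ext_iff] at this

lemma ptZero_ne_ptOne : ptZero (ZMod 2) ≠ ptOne (ZMod 2) := by
  intro h
  have := mk_injective _ _ h
  simp [Prod.ext_iff] at this

lemma ptInf_ne_ptOne : ptInf (ZMod 2) ≠ ptOne (ZMod 2) := by
  intro h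
  have := mk_injective _ _ h
  simp [Prod.ext_iff] at this

/-- Pigeonhole in the 3-element set `P1 (ZMod 2)`. -/
lemma third_eq {a b x y : P1 (ZMod 2)} (hab : a ≠ b)
    (hxa : x ≠ a) (hxb : x ≠ b) (hya : y ≠ a) (hyb : y ≠ b) : x = y := by
  have h0 := ptZero_ne_ptInf
  have h1 := ptZero_ne_ptOne
  have h2 := ptInf_ne_ptOne
  rcases P1_cases a with rfl | rfl | rfl <;>
    rcases P1_cases b with rfl | rfl | rfl <;>
      rcases P1_cases x with rfl | rfl | rfl <;>
        rcases P1_cases y with rfl | rfl | rfl <;>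
          simp_all

/-- Crossing as a predicate on raw endpoints. -/
def CrossP (a b c d : ℕ) : Prop :=
  (a < c ∧ c < b ∧ b < d) ∨ (c < a ∧ a < d ∧ d < b)

/-- Any pairwise noncrossing set of diagonal-pairs of the `(m+1)`-gon has at most
`m - 2` elements. -/
lemma noncross_pairs_card_le :
    ∀ m : ℕ, ∀ S : Finset (ℕ × ℕ),
      (∀ p ∈ S, IsDiag m p) →
      (∀ p ∈ S, ∀ q ∈ S, ¬ CrossP p.1 p.2 q.1 q.2) →
      S.card ≤ m - 2 := by
  intro m
  induction m using Nat.strong_induction_on with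
  | _ m ih =>
    intro S hdiag hcr
    rcases S.eq_empty_or_nonempty with rfl | hne
    · simp
    · obtain ⟨⟨a, b⟩, hab, hmin⟩ := S.exists_min_image (fun p => p.2 - p.1) hne
      obtain ⟨hab2, hbm, habne⟩ := hdiag _ hab
      -- endpoints of other diagonals avoid the open interval (a, b)
      have hout : ∀ p ∈ S, p ≠ (a, b) →
          (p.1 ≤ a ∨ b ≤ p.1) ∧ (p.2 ≤ a ∨ b ≤ p.2) := by
        intro p hp hpne
        obtain ⟨hp2, hpm, -⟩ := hdiag p hp
        have hsp : b - a ≤ p.2 - p.1 := hmin p hp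
        have h1 := hcr _ hab _ hp
        simp only [CrossP, not_or] at h1
        constructor
        · by_contra h; push_neg at h
          rcases le_or_gt p.2 b with h' | h'
          · omega
          · exact h1.1 ⟨by omega, by omega, h'⟩
        · by_contra h; push_neg at h
          rcases le_or_gt a p.1 with h' | h'
          · omega
          · exact h1.2 ⟨h', by omega, by omega⟩
      set s := b - a - 1 with hs
      set g : ℕ → ℕ := fun x => if x ≤ a then x else x - s with hg
      have hglt : ∀ x y : ℕ, (x ≤ a ∨ b ≤ x) → (y ≤ a ∨ b ≤ y) → (g x < g y ↔ x < y) := by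
        intro x y hx hy
        simp only [hg]
        split_ifs <;> omega
      have hginj : ∀ x y : ℕ, (x ≤ a ∨ b ≤ x) → (y ≤ a ∨ b ≤ y) → g x = g y → x = y := by
        intro x y hx hy
        simp only [hg]
        split_ifs <;> omega
      set m' := m - s with hm'
      have hm'lt : m' < m := by omega
      set S' := (S.erase (a, b)).image (fun p => (g p.1, g p.2)) with hS'
      have hcard' : S'.card = S.card - 1 := by
        rw [hS', Finset.card_image_of_injOn, Finset.card_erase_of_mem hab]
        intro p hp q hq hpq
        simp only [Finset.coe_erase, Set.mem_diff, Finset.mem_coe, Set.mem_singleton_iff] at hp hq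
        obtain ⟨hop1, hop2⟩ := hout p hp.1 hp.2
        obtain ⟨hoq1, hoq2⟩ := hout q hq.1 hq.2
        have e1 : g p.1 = g q.1 := congrArg Prod.fst hpq
        have e2 : g p.2 = g q.2 := congrArg Prod.snd hpq
        exact Prod.ext (hginj _ _ hop1 hoq1 e1) (hginj _ _ hop2 hoq2 e2)
      have hdiag' : ∀ p ∈ S', IsDiag m' p := by
        intro p hp
        simp only [hS', Finset.mem_image, Finset.mem_erase] at hp
        obtain ⟨q, ⟨hqne, hqS⟩, rfl⟩ := hp
        obtain ⟨hq2, hqm, hq0⟩ := hdiag q hqS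
        obtain ⟨ho1, ho2⟩ := hout q hqS hqne
        have hqne' : ¬(q.1 = a ∧ q.2 = b) := by
          intro h; exact hqne (Prod.ext h.1 h.2)
        refine ⟨?_, ?_, ?_⟩ <;> simp only [hg, hm', hs] <;> split_ifs <;> omega
      have hcr' : ∀ p ∈ S', ∀ q ∈ S', ¬ CrossP p.1 p.2 q.1 q.2 := by
        intro p hp q hq hc
        simp only [hS', Finset.mem_image, Finset.mem_erase] at hp hq
        obtain ⟨p0, ⟨hpne, hpS⟩, rfl⟩ := hp
        obtain ⟨q0, ⟨hqne, hqS⟩, rfl⟩ := hq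
        obtain ⟨hop1, hop2⟩ := hout p0 hpS hpne
        obtain ⟨hoq1, hoq2⟩ := hout q0 hqS hqne
        apply hcr p0 hpS q0 hqS
        rcases hc with ⟨u1, u2, u3⟩ | ⟨u1, u2, u3⟩
        · exact Or.inl ⟨(hglt _ _ hop1 hoq1).mp u1, (hglt _ _ hoq1 hop2).mp u2,
            (hglt _ _ hop2 hoq2).mp u3⟩
        · exact Or.inr ⟨(hglt _ _ hoq1 hop1).mp u1, (hglt _ _ hop1 hoq2).mp u2,
            (hglt _ _ hoq2 hop2).mp u3⟩
      have hb := ih m' hm'lt S' hdiag' hcr'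
      have hpos : 0 < S.card := Finset.card_pos.mpr ⟨_, hab⟩
      omega

/-- The card bound for sets of `Diagonal m`. -/
lemma noncross_card_le {m : ℕ} (F : Finset (Diagonal m))
    (h : ∀ d ∈ F, ∀ e ∈ F, ¬ Crossing d e) : F.card ≤ m - 2 := by
  have hinj : Function.Injective (Subtype.val : Diagonal m → ℕ × ℕ) := Subtype.val_injective
  rw [← Finset.card_image_of_injective F hinj]
  apply noncross_pairs_card_le m
  · intro p hp
    obtain ⟨d, hd, rfl⟩ := Finset.mem_image.mp hp
    exact d.2
  · intro p hp q hq
    obtain ⟨d, hd, rfl⟩ := Finset.mem_image.mp hp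
    obtain ⟨e, he, rfl⟩ := Finset.mem_image.mp hq
    exact h d hd e he

/-- `(a,b)` is an edge of the triangulated polygon: a side, the long side `(0,m)`,
or a diagonal of `T`. -/
def Edge (m : ℕ) (T : Triangulation m) (a b : ℕ) : Prop :=
  a < b ∧ b ≤ m ∧
    (b = a + 1 ∨ (a = 0 ∧ b = m) ∨ ∃ h : IsDiag m (a, b), (⟨(a, b), h⟩ : Diagonal m) ∈ T.diags)

lemma edge_of_mem {m : ℕ} {T : Triangulation m} {d : Diagonal m} (hd : d ∈ T.diags) :
    Edge m T d.val.1 d.val.2 := by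
  obtain ⟨h1, h2, h3⟩ := d.2
  exact ⟨by omega, h2, Or.inr (Or.inr ⟨d.2, hd⟩)⟩

lemma edge_ne {F : Type*} [Field F] {m : ℕ} {T : Triangulation m} {c : ℕ → P1 F}
    (hc : ProperGraph T c) {a b : ℕ} (h : Edge m T a b) : c a ≠ c b := by
  obtain ⟨hab, hbm, hside | ⟨rfl, rfl⟩ | ⟨hd, hmem⟩⟩ := h
  · subst hside; exact hc.1 a (by omega)
  · exact fun h => hc.2.1 h.symm
  · exact hc.2.2 _ hmem

lemma edge_not_cross {m : ℕ} {T : Triangulation m} {a b : ℕ} (h : Edge m T a b)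
    {e : Diagonal m} (he : e ∈ T.diags) : ¬ CrossP a b e.val.1 e.val.2 := by
  obtain ⟨hab, hbm, hside | ⟨rfl, rfl⟩ | ⟨hd, hmem⟩⟩ := h
  · obtain ⟨he1, he2, -⟩ := e.2
    intro hcr; rcases hcr with ⟨u1, u2, u3⟩ | ⟨u1, u2, u3⟩ <;> omega
  · obtain ⟨he1, he2, -⟩ := e.2
    intro hcr; rcases hcr with ⟨u1, u2, u3⟩ | ⟨u1, u2, u3⟩ <;> omega
  · exact T.noncross _ hmem _ he

lemma crossP_of_crossing {m : ℕ} {d e : Diagonal m} (h : Crossing d e) :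
    CrossP d.val.1 d.val.2 e.val.1 e.val.2 := h

/-- Every long-enough edge of a triangulation has an interior apex. -/
lemma exists_apex {m : ℕ} (T : Triangulation m) {a b : ℕ} (hE : Edge m T a b)
    (hab : a + 2 ≤ b) : ∃ k, a < k ∧ k < b ∧ Edge m T a k ∧ Edge m T k b := by
  classical
  have hbm : b ≤ m := hE.2.1
  set P : ℕ → Prop := fun k => a < k ∧ Edge m T a k with hP
  have hbase : P (a + 1) := ⟨by omega, by omega, by omega, Or.inl rfl⟩
  set k := Nat.findGreatest P (b - 1) with hk
  have hPk : P k := Nat.findGreatest_spec (by omega : a + 1 ≤ b - 1) hbase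
  have hkle : k ≤ b - 1 := Nat.findGreatest_le _
  have hmax : ∀ j, k < j → j ≤ b - 1 → ¬ P j :=
    fun j h1 h2 => Nat.findGreatest_is_greatest h1 h2
  obtain ⟨hak, hEak⟩ := hPk
  by_cases hkb : Edge m T k b
  · exact ⟨k, hak, by omega, hEak, hkb⟩
  exfalso
  have hkb2 : k + 2 ≤ b := by
    rcases Nat.lt_or_ge (k + 1) b with h | h
    · omega
    · exact absurd ⟨by omega, by omega, Or.inl (by omega)⟩ hkb
  have hD : IsDiag m (k, b) := ⟨hkb2, hbm, by omega⟩
  have hnotmem : (⟨(k, b), hD⟩ : Diagonal m) ∉ T.diags := by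
    intro hmem
    exact hkb ⟨by omega, hbm, Or.inr (Or.inr ⟨hD, hmem⟩)⟩
  have hnc : ∀ e ∈ T.diags, ¬ CrossP k b e.val.1 e.val.2 := by
    intro e he hcr
    obtain ⟨he2, hem, -⟩ := e.2
    rcases hcr with ⟨u1, u2, u3⟩ | ⟨u1, u2, u3⟩
    · -- k < e1 < b < e2
      exact edge_not_cross hE he (Or.inl ⟨by omega, by omega, u3⟩)
    · -- e1 < k < e2 < b
      rcases Nat.lt_trichotomy e.val.1 a with h' | h' | h'
      · exact edge_not_cross hE he (Or.inr ⟨h', by omega, by omega⟩)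
      · -- e = (a, e2) with k < e2 < b : contradicts maximality
        have hEe : Edge m T a e.val.2 := by
          have := edge_of_mem he; rwa [h'] at this
        exact hmax e.val.2 u2 (by omega) ⟨by omega, hEe⟩
      · exact edge_not_cross hEak he (Or.inl ⟨h', by omega, by omega⟩)
  have hnc' : ∀ d ∈ insert (⟨(k, b), hD⟩ : Diagonal m) T.diags,
      ∀ e ∈ insert (⟨(k, b), hD⟩ : Diagonal m) T.diags, ¬ Crossing d e := by
    intro d hd e he
    rcases Finset.mem_insert.mp hd with rfl | hd <;>
      rcases Finset.mem_insert.mp he with he' | he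
    · intro hcr; rcases crossP_of_crossing hcr with ⟨u1, u2, u3⟩ | ⟨u1, u2, u3⟩ <;>
        rw [he'] at * <;> simp_all
    · exact hnc e he
    · rw [he']
      intro hcr
      rcases crossP_of_crossing hcr with ⟨u1, u2, u3⟩ | ⟨u1, u2, u3⟩
      · exact hnc d hd (Or.inr ⟨u1, u2, u3⟩)
      · exact hnc d hd (Or.inl ⟨u1, u2, u3⟩)
    · exact T.noncross d hd e he
  have hcard := noncross_card_le _ hnc'
  rw [Finset.card_insert_of_notMem hnotmem, T.card_eq] at hcard
  omega

/-- Every diagonal of `T` strictly inside an edge `(x,y)` has an outer apex within `[x,y]`. -/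
lemma exists_outer_apex {m : ℕ} (T : Triangulation m) :
    ∀ n x y, Edge m T x y → y - x ≤ n →
      ∀ a b, (ha : IsDiag m (a, b)) → (⟨(a, b), ha⟩ : Diagonal m) ∈ T.diags →
      x ≤ a → b ≤ y → ¬(a = x ∧ b = y) →
      ∃ k, (k < a ∧ x ≤ k ∧ Edge m T k a ∧ Edge m T k b) ∨
           (b < k ∧ k ≤ y ∧ Edge m T a k ∧ Edge m T b k) := by
  intro n
  induction n with
  | zero =>
    intro x y hE hn a b ha hmem hxa hby hne
    have := hE.1; obtain ⟨h1, -, -⟩ := ha; omega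
  | succ n ih =>
    intro x y hE hn a b ha hmem hxa hby hne
    obtain ⟨ha2, hbm, ha0⟩ := ha
    have hxy2 : x + 2 ≤ y := by omega
    obtain ⟨k0, hxk0, hk0y, hExk, hEky⟩ := exists_apex T hE hxy2
    have hcrx : ¬ CrossP x k0 a b := edge_not_cross hExk hmem
    have hcry : ¬ CrossP k0 y a b := edge_not_cross hEky hmem
    have hrange : b ≤ k0 ∨ k0 ≤ a := by
      by_contra hcon
      push_neg at hcon
      obtain ⟨hbk, hka⟩ := hcon
      rcases Nat.lt_or_ge x a with h' | h'
      · exact hcrx (Or.inl ⟨h', hka, hbk⟩)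
      · have hax : a = x := by omega
        rcases Nat.lt_or_ge b y with h'' | h''
        · exact hcry (Or.inr ⟨by omega, by omega, h''⟩)
        · exact hne ⟨hax, by omega⟩
    rcases hrange with hbk | hka
    · by_cases hh : a = x ∧ b = k0
      · exact ⟨y, Or.inr ⟨by omega, le_refl y, by rw [hh.1]; exact hE,
          by rw [hh.2]; exact hEky⟩⟩
      · obtain ⟨k, hk⟩ := ih x k0 hExk (by omega) a b ⟨ha2, hbm, ha0⟩ hmem hxa hbk hh
        refine ⟨k, ?_⟩
        rcases hk with ⟨u1, u2, u3, u4⟩ | ⟨u1, u2, u3, u4⟩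
        · exact Or.inl ⟨u1, u2, u3, u4⟩
        · exact Or.inr ⟨u1, by omega, u3, u4⟩
    · by_cases hh : a = k0 ∧ b = y
      · exact ⟨x, Or.inl ⟨by omega, le_refl x, by rw [hh.1]; exact hExk,
          by rw [hh.2]; exact hE⟩⟩
      · obtain ⟨k, hk⟩ := ih k0 y hEky (by omega) a b ⟨ha2, hbm, ha0⟩ hmem hka hby hh
        refine ⟨k, ?_⟩
        rcases hk with ⟨u1, u2, u3, u4⟩ | ⟨u1, u2, u3, u4⟩
        · exact Or.inl ⟨u1, by omega, u3, u4⟩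
        · exact Or.inr ⟨u1, u2, u3, u4⟩

/-- Uniqueness of a proper coloring on the span of an edge, given the endpoint values. -/
lemma agree_on_edge {m : ℕ} {T : Triangulation m} {c c' : ℕ → P1 (ZMod 2)}
    (hc : ProperGraph T c) (hc' : ProperGraph T c') :
    ∀ n x y, Edge m T x y → y - x ≤ n → c x = c' x → c y = c' y →
      ∀ i, x ≤ i → i ≤ y → c i = c' i := by
  intro n
  induction n with
  | zero => intro x y hE hn; have := hE.1; omega
  | succ n ih =>
    intro x y hE hn hx hy i hxi hiy
    rcases Nat.lt_or_ge (y) (x + 2) with h | h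
    · -- y = x + 1
      have := hE.1
      rcases (by omega : i = x ∨ i = y) with rfl | rfl
      · exact hx
      · exact hy
    · obtain ⟨k, hxk, hky, hExk, hEky⟩ := exists_apex T hE h
      have hk : c k = c' k := by
        refine third_eq (x := c k) (y := c' k) (a := c x) (b := c y)
          (edge_ne hc hE) (Ne.symm (edge_ne hc hExk)) (edge_ne hc hEky) ?_ ?_
        · rw [hx]; exact Ne.symm (edge_ne hc' hExk)
        · rw [hy]; exact edge_ne hc' hEky
      rcases Nat.lt_or_ge i k with h' | h'
      · exact ih x k hExk (by omega) hx hk i hxi (by omega)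
      · exact ih k y hEky (by omega) hk hy i h' hiy

/-- Uniqueness of the proper coloring of a triangulation with fixed boundary values. -/
lemma coloring_unique {m : ℕ} (hm : 1 ≤ m) {T : Triangulation m} {c c' : ℕ → P1 (ZMod 2)}
    (hc : ProperGraph T c) (hc' : ProperGraph T c')
    (h0 : c 0 = c' 0) (hmm : c m = c' m) : ∀ i ≤ m, c i = c' i := by
  intro i hi
  exact agree_on_edge hc hc' m 0 m ⟨by omega, le_refl m, Or.inr (Or.inl ⟨rfl, rfl⟩)⟩
    (by omega) h0 hmm i (by omega) hi

/-- A proper coloring of `T` is also proper for the result `T'` of an inscribed-triangle move. -/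
lemma move_proper {m : ℕ} {T T' : Triangulation m} (hmv : InscribedMoveOne T T')
    {c : ℕ → P1 (ZMod 2)} (hcP : ProperGraph T c) : ProperGraph T' c := by
  obtain ⟨v, hv, hv5, h1, h2, h3, h4, h5, h6, hsub, hT'⟩ := hmv
  have o01 : v 0 < v 1 := hv (by decide)
  have o12 : v 1 < v 2 := hv (by decide)
  have o23 : v 2 < v 3 := hv (by decide)
  have o34 : v 3 < v 4 := hv (by decide)
  have o45 : v 4 < v 5 := hv (by decide)
  have hold1 : (⟨(v 0, v 2), h1⟩ : Diagonal m) ∈ T.diags := hsub (by simp)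
  have hold2 : (⟨(v 2, v 4), h2⟩ : Diagonal m) ∈ T.diags := hsub (by simp)
  have hold3 : (⟨(v 0, v 4), h3⟩ : Diagonal m) ∈ T.diags := hsub (by simp)
  have hnew1 : (⟨(v 1, v 3), h4⟩ : Diagonal m) ∈ T'.diags := by
    rw [hT']; exact Finset.mem_union_right _ (by simp)
  have hnew2 : (⟨(v 3, v 5), h5⟩ : Diagonal m) ∈ T'.diags := by
    rw [hT']; exact Finset.mem_union_right _ (by simp)
  have hnew3 : (⟨(v 1, v 5), h6⟩ : Diagonal m) ∈ T'.diags := by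
    rw [hT']; exact Finset.mem_union_right _ (by simp)
  have hE02 : Edge m T (v 0) (v 2) := edge_of_mem hold1
  have hE24 : Edge m T (v 2) (v 4) := edge_of_mem hold2
  have hE04 : Edge m T (v 0) (v 4) := edge_of_mem hold3
  have hmemT' : ∀ p q : ℕ, Edge m T p q → p + 2 ≤ q → ¬(p = 0 ∧ q = m) →
      ¬(p = v 0 ∧ q = v 2) → ¬(p = v 2 ∧ q = v 4) → ¬(p = v 0 ∧ q = v 4) →
      ∃ h : IsDiag m (p, q), (⟨(p, q), h⟩ : Diagonal m) ∈ T'.diags := by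
    intro p q hE hpq h0m hn1 hn2 hn3
    obtain ⟨hlt, hle, hside | h0 | ⟨hd, hmem⟩⟩ := hE
    · omega
    · exact absurd h0 h0m
    · refine ⟨hd, ?_⟩
      rw [hT']
      apply Finset.mem_union_left
      rw [Finset.mem_sdiff]
      refine ⟨hmem, ?_⟩
      simp only [Finset.mem_insert, Finset.mem_singleton, Subtype.mk.injEq, Prod.mk.injEq,
        not_or]
      tauto
  -- the apex of (v0, v2) in T is v1
  obtain ⟨k, hk1, hk2, hE0k, hEk2⟩ := exists_apex T hE02 (by omega)
  have hkv1 : k = v 1 := by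
    rcases Nat.lt_trichotomy k (v 1) with h | h | h
    · exfalso
      obtain ⟨hd, hmem'⟩ := hmemT' k (v 2) hEk2 (by omega) (by omega) (by omega) (by omega)
        (by omega)
      have hcr : CrossP k (v 2) (v 1) (v 3) := Or.inl ⟨by omega, by omega, by omega⟩
      exact T'.noncross _ hmem' _ hnew1 hcr
    · exact h
    · exfalso
      obtain ⟨hd, hmem'⟩ := hmemT' (v 0) k hE0k (by omega) (by omega) (by omega) (by omega)
        (by omega)
      have hcr : CrossP (v 0) k (v 1) (v 3) := Or.inl ⟨by omega, by omega, by omega⟩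
      exact T'.noncross _ hmem' _ hnew1 hcr
  subst hkv1
  -- the apex of (v2, v4) in T is v3
  obtain ⟨k, hk1', hk2', hE2k, hEk4⟩ := exists_apex T hE24 (by omega)
  have hkv3 : k = v 3 := by
    rcases Nat.lt_trichotomy k (v 3) with h | h | h
    · exfalso
      obtain ⟨hd, hmem'⟩ := hmemT' k (v 4) hEk4 (by omega) (by omega) (by omega) (by omega)
        (by omega)
      have hcr : CrossP k (v 4) (v 3) (v 5) := Or.inl ⟨by omega, by omega, by omega⟩
      exact T'.noncross _ hmem' _ hnew2 hcr
    · exact h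
    · exfalso
      obtain ⟨hd, hmem'⟩ := hmemT' (v 2) k hE2k (by omega) (by omega) (by omega) (by omega)
        (by omega)
      have hcr : CrossP (v 2) k (v 1) (v 3) := Or.inr ⟨by omega, by omega, by omega⟩
      exact T'.noncross _ hmem' _ hnew1 hcr
  subst hkv3
  -- the outer apex of (v0, v4) in T is v5
  have hE0m : Edge m T 0 m := ⟨by omega, le_refl m, Or.inr (Or.inl ⟨rfl, rfl⟩)⟩
  obtain ⟨k, hk⟩ := exists_outer_apex T m 0 m hE0m (by omega) (v 0) (v 4) h3 hold3
    (by omega) (by omega) (by intro hh; exact h3.2.2 hh)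
  have hk45 : Edge m T (v 4) (v 5) ∧ Edge m T (v 0) (v 5) := by
    rcases hk with ⟨u1, u2, u3, u4⟩ | ⟨u1, u2, u3, u4⟩
    · exfalso
      obtain ⟨hd, hmem'⟩ := hmemT' k (v 4) u4 (by omega) (by omega) (by omega) (by omega)
        (by omega)
      have hcr : CrossP k (v 4) (v 1) (v 5) := Or.inl ⟨by omega, by omega, by omega⟩
      exact T'.noncross _ hmem' _ hnew3 hcr
    · rcases Nat.lt_trichotomy k (v 5) with h | h | h
      · exfalso
        obtain ⟨hd, hmem'⟩ := hmemT' (v 0) k u3 (by omega) (by omega) (by omega) (by omega)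
          (by omega)
        have hcr : CrossP (v 0) k (v 3) (v 5) := Or.inl ⟨by omega, by omega, by omega⟩
        exact T'.noncross _ hmem' _ hnew2 hcr
      · subst h; exact ⟨u4, u3⟩
      · exfalso
        obtain ⟨hd, hmem'⟩ := hmemT' (v 4) k u4 (by omega) (by omega) (by omega) (by omega)
          (by omega)
        have hcr : CrossP (v 4) k (v 3) (v 5) := Or.inr ⟨by omega, by omega, by omega⟩
        exact T'.noncross _ hmem' _ hnew2 hcr
  obtain ⟨hE45, hE05⟩ := hk45
  -- color facts
  have c01 := edge_ne hcP hE0k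
  have c12 := edge_ne hcP hEk2
  have c02 := edge_ne hcP hE02
  have c23 := edge_ne hcP hE2k
  have c34 := edge_ne hcP hEk4
  have c24 := edge_ne hcP hE24
  have c04 := edge_ne hcP hE04
  have c45 := edge_ne hcP hE45
  have c05 := edge_ne hcP hE05
  have hc1 : c (v 1) = c (v 4) := third_eq c02 (Ne.symm c01) c12 (Ne.symm c04) (Ne.symm c24)
  have hc3 : c (v 3) = c (v 0) := third_eq c24 (Ne.symm c23) c34 c02 c04
  have hc5 : c (v 5) = c (v 2) := by
    refine third_eq (a := c (v 4)) (b := c (v 0)) ?_ ?_ ?_ ?_ ?_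
    · exact Ne.symm c04
    · exact Ne.symm c45
    · exact Ne.symm c05
    · exact c24
    · exact Ne.symm c02
  have d13 : c (v 1) ≠ c (v 3) := by rw [hc1, hc3]; exact Ne.symm c04
  have d35 : c (v 3) ≠ c (v 5) := by rw [hc3, hc5]; exact c02
  have d15 : c (v 1) ≠ c (v 5) := by rw [hc1, hc5]; exact Ne.symm c24
  refine ⟨hcP.1, hcP.2.1, ?_⟩
  intro d hd
  rw [hT'] at hd
  rcases Finset.mem_union.mp hd with hd | hd
  · exact hcP.2.2 d (Finset.mem_sdiff.mp hd).1
  · simp only [Finset.mem_insert, Finset.mem_singleton] at hd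
    rcases hd with rfl | rfl | rfl
    · exact d13
    · exact d35
    · exact d15


theorem stmt9 (m : ℕ) (hm : 1 ≤ m) (T T' : Triangulation m)
    (hmove : InscribedMoveOne T T' ∨ InscribedMoveOne T' T)
    (c c' : ℕ → P1 (ZMod 2))
    (hc : c 0 = ptZero (ZMod 2) ∧ c m = ptInf (ZMod 2) ∧ ProperGraph T c)
    (hc' : c' 0 = ptZero (ZMod 2) ∧ c' m = ptInf (ZMod 2) ∧ ProperGraph T' c') :
    ∀ i ≤ m, c i = c' i := by
  obtain ⟨hc0, hcm, hcP⟩ := hc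
  obtain ⟨hc'0, hc'm, hc'P⟩ := hc'
  rcases hmove with hmv | hmv
  · exact coloring_unique hm (move_proper hmv hcP) hc'P (by rw [hc0, hc'0]) (by rw [hcm, hc'm])
  · exact coloring_unique hm hcP (move_proper hmv hc'P) (by rw [hc0, hc'0]) (by rw [hcm, hc'm])
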